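/- Let H be a distribution over functions h : [T] → [K], y ∈ [K], M ⊆ [T] with |M| = m, such that Pr[H(x)=y] > 0 for every x ∈ M. Let D₂ be the distribution of h obtained by picking x uniformly from M and sampling h conditioned on h(x)=y, and D₁ the unconditioned distribution. Then RD(D₁,D₂) = (1/m²)·[ Σ_{x∈M} 1/Pr[H(x)=y] + Σ_{x≠x' ∈ M} Pr[H(x)=y ∧ H(x')=y]/(Pr[H(x)=y]·Pr[H(x')=y]) ]. -/
import Mathlib


open Finset

/-- Exact formula for the order-2 Rényi divergence between the unconditioned
hash distribution and the distribution conditioned on `h(x) = y` for a random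
`x ∈ M`. -/
theorem stmt13 (T K : ℕ)
    (μ : (Fin T → Fin K) → ℝ) (hμ0 : ∀ h, 0 ≤ μ h) (hμ1 : ∑ h, μ h = 1)
    (y : Fin K) (M : Finset (Fin T)) (m : ℕ) (hm : M.card = m) (hm0 : 0 < m)
    (hpos : ∀ x ∈ M, 0 < ∑ h, if h x = y then μ h else 0)
    (D₂ : (Fin T → Fin K) → ℝ)
    (hD₂ : ∀ h, D₂ h = (1 / (m : ℝ)) * ∑ x ∈ M,
      (if h x = y then μ h else 0) / (∑ g, if g x = y then μ g else 0)) :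
    (∑ h, if 0 < D₂ h then (D₂ h) ^ 2 / μ h else 0)
      = (1 / (m : ℝ) ^ 2) *
        ((∑ x ∈ M, 1 / (∑ h, if h x = y then μ h else 0)) +
         ∑ x ∈ M, ∑ x' ∈ M \ {x},
           (∑ h, if h x = y ∧ h x' = y then μ h else 0) /
             ((∑ h, if h x = y then μ h else 0) * (∑ h, if h x' = y then μ h else 0))) := by
  set p : Fin T → ℝ := fun x => ∑ h, if h x = y then μ h else 0 with hpdef
  have hppos : ∀ x ∈ M, 0 < p x := hpos
  have hmR : (0:ℝ) < m := by exact_mod_cast hm0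
  set S : (Fin T → Fin K) → ℝ := fun h => ∑ x ∈ M, if h x = y then 1 / p x else 0 with hSdef
  have key : ∀ h, (if 0 < D₂ h then (D₂ h) ^ 2 / μ h else 0)
      = (1/(m:ℝ)^2) * (μ h * (S h)^2) := by
    intro h
    have hS0 : 0 ≤ S h := by
      apply Finset.sum_nonneg
      intro x hx
      by_cases hxy : h x = y <;> simp [hxy]
      exact le_of_lt (hppos x hx)
    have hD : D₂ h = (1/(m:ℝ)) * (μ h * S h) := by
      rw [hD₂]
      congr 1
      rw [hSdef, Finset.mul_sum]
      apply Finset.sum_congr rfl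
      intro x hx
      show (if h x = y then μ h else 0) / p x = μ h * (if h x = y then 1 / p x else 0)
      by_cases hxy : h x = y <;> simp [hxy, mul_one_div, div_eq_mul_inv]
    rcases eq_or_lt_of_le (hμ0 h) with hμ | hμ
    · simp [hD, ← hμ]
    · rcases eq_or_lt_of_le hS0 with hS | hS
      · simp [hD, ← hS]
      · have hpos' : 0 < D₂ h := by
          rw [hD]; positivity
        rw [if_pos hpos', hD]
        field_simp
  calc (∑ h, if 0 < D₂ h then (D₂ h) ^ 2 / μ h else 0)
      = ∑ h, (1/(m:ℝ)^2) * (μ h * (S h)^2) := Finset.sum_congr rfl fun h _ => key h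
    _ = (1/(m:ℝ)^2) * ∑ h, μ h * (S h)^2 := by rw [Finset.mul_sum]
    _ = (1/(m:ℝ)^2) * ((∑ x ∈ M, 1 / p x) +
         ∑ x ∈ M, ∑ x' ∈ M \ {x},
           (∑ h, if h x = y ∧ h x' = y then μ h else 0) / (p x * p x')) := by
        congr 1
        have expand : ∑ h, μ h * (S h)^2
            = ∑ x ∈ M, ∑ x' ∈ M,
              (∑ h, if h x = y ∧ h x' = y then μ h else 0) / (p x * p x') := by
          have h1 : ∀ h, μ h * (S h)^2 = ∑ x ∈ M, ∑ x' ∈ M,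
              μ h * ((if h x = y then 1 / p x else 0) * (if h x' = y then 1 / p x' else 0)) := by
            intro h
            rw [sq, hSdef]
            rw [Finset.sum_mul_sum, Finset.mul_sum]
            exact Finset.sum_congr rfl fun x _ => by rw [Finset.mul_sum]
          rw [Finset.sum_congr rfl fun h _ => h1 h, Finset.sum_comm]
          apply Finset.sum_congr rfl
          intro x hx
          rw [Finset.sum_comm]
          apply Finset.sum_congr rfl
          intro x' hx'
          have h2 : ∀ h, μ h * ((if h x = y then 1 / p x else 0) * (if h x' = y then 1 / p x' else 0))
              = (if h x = y ∧ h x' = y then μ h else 0) * (1 / (p x * p x')) := by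
            intro h
            by_cases hc1 : h x = y
            all_goals by_cases hc2 : h x' = y
            · rw [if_pos hc1, if_pos hc2, if_pos ⟨hc1, hc2⟩, div_mul_div_comm, one_mul]
            · rw [if_pos hc1, if_neg hc2, if_neg (fun hc => hc2 hc.2)]; ring
            · rw [if_neg hc1, if_pos hc2, if_neg (fun hc => hc1 hc.1)]; ring
            · rw [if_neg hc1, if_neg hc2, if_neg (fun hc => hc1 hc.1)]; ring
          rw [Finset.sum_congr rfl fun h _ => h2 h, ← Finset.sum_mul, mul_one_div]
        rw [expand, ← Finset.sum_add_distrib]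
        apply Finset.sum_congr rfl
        intro x hx
        have hdiag : (∑ h, if h x = y ∧ h x = y then μ h else 0) / (p x * p x) = 1 / p x := by
          have e : (∑ h, if h x = y ∧ h x = y then μ h else 0) = p x := by
            apply Finset.sum_congr rfl
            intro h _
            simp
          rw [e, div_eq_div_iff (by have := hppos x hx; positivity) (hppos x hx).ne']
          ring
        rw [← Finset.add_sum_erase _ _ hx, hdiag, Finset.erase_eq]
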